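/- Define u₀ : [0,1] → ℝ by u₀(x) = 0 for x ≤ 1/2 and u₀(x) = x² − x + 1/4 (i.e. u₀(x) = (x − 1/2)²) for x ≥ 1/2. Then u₀ minimizes the functional L[v] := ∫₀¹ ( (1/2) v′(x)² + v(x) − x v′(x) ) dx over all nonnegative convex Lipschitz functions v : [0,1] → ℝ; that is, L[u₀] ≤ L[v] for every such v. -/

import Mathlib

/-!
Calibration. For any absolutely continuous `ψ` with `ψ 0 = 0` and `ψ 1 = 1`, pointwise
`½ v'² + v − x v' = ½ (v' − ψ)² + (2 − ψ') v − ½ ψ² + ((ψ v)' − (x v)')`,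
and the last bracket integrates to `v 1 − v 1 = 0`. Hence `L[v] ≥ −∫ ½ ψ²` as soon as
`(2 − ψ') v ≥ 0`, with equality if moreover `v' = ψ` and `(2 − ψ') v = 0`.
For `ψ = u₀'`, which is `2`-Lipschitz (so `ψ' ≤ 2`) with `ψ' = 2` wherever `u₀ ≠ 0`,
the equality case applies to `u₀` and the inequality to every nonnegative `v`.
-/

open MeasureTheory intervalIntegral

noncomputable section

/-- The one-dimensional principal-agent functional
`L[v] = ∫₀¹ (½ v'(x)² + v(x) − x v'(x)) dx`. -/
def L1d (v : ℝ → ℝ) : ℝ :=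
  ∫ x in (0:ℝ)..1, (1 / 2 * (deriv v x) ^ 2 + v x - x * deriv v x)

open Set

theorem LipschitzOnWith.intervalIntegrable_deriv_sq {f : ℝ → ℝ} {K : NNReal} {a b : ℝ}
    (hab : a ≤ b) (hf : LipschitzOnWith K f (Icc a b)) :
    IntervalIntegrable (fun x => deriv f x ^ 2) volume a b := by
  rw [intervalIntegrable_iff_integrableOn_Ioo_of_le hab]
  refine Measure.integrableOn_of_bounded (M := (K : ℝ) ^ 2) measure_Ioo_lt_top.ne
    ((measurable_deriv f).pow_const 2).aestronglyMeasurable ?_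
  filter_upwards [ae_restrict_mem measurableSet_Ioo] with x hx
  rw [norm_pow]
  exact pow_le_pow_left₀ (norm_nonneg _)
    (norm_deriv_le_of_lipschitzOn (Icc_mem_nhds hx.1 hx.2) hf) 2

namespace L1d

section Calibration

variable {v ψ : ℝ → ℝ} (hv : AbsolutelyContinuousOnInterval v 0 1)
  (hv' : IntervalIntegrable (fun x => deriv v x ^ 2) volume 0 1)
  (hψ : AbsolutelyContinuousOnInterval ψ 0 1)
include hv hv' hψ

theorem intervalIntegrable_calibration :
    IntervalIntegrable (fun x => 1 / 2 * (deriv v x - ψ x) ^ 2 + (2 - deriv ψ x) * v x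
      - 1 / 2 * ψ x ^ 2) volume 0 1 := by
  have h := ((hv'.const_mul (1 / 2)).sub
      (hv.intervalIntegrable_deriv.mul_continuousOn hψ.continuousOn)).add
    ((hv.continuousOn.intervalIntegrable.const_mul 2).sub
      (hψ.intervalIntegrable_deriv.mul_continuousOn hv.continuousOn))
  convert h using 1
  funext x
  ring

variable (hψ0 : ψ 0 = 0) (hψ1 : ψ 1 = 1)
include hψ0 hψ1

theorem eq_integral_calibration :
    L1d v = ∫ x in (0:ℝ)..1,
      (1 / 2 * (deriv v x - ψ x) ^ 2 + (2 - deriv ψ x) * v x - 1 / 2 * ψ x ^ 2) := by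
  have hid : AbsolutelyContinuousOnInterval (fun x : ℝ => x) 0 1 :=
    LipschitzWith.id.lipschitzOnWith.absolutelyContinuousOnInterval
  have hψv := hψ.integral_deriv_mul_eq_sub hv
  have hidv := hid.integral_deriv_mul_eq_sub hv
  simp only [deriv_id'', one_mul, hψ0, hψ1, zero_mul, sub_zero] at hψv hidv
  have hψvI : IntervalIntegrable (fun x => deriv ψ x * v x + ψ x * deriv v x) volume 0 1 :=
    (hψ.intervalIntegrable_deriv.mul_continuousOn hv.continuousOn).add
      (hv.intervalIntegrable_deriv.continuousOn_mul hψ.continuousOn)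
  have hidvI : IntervalIntegrable (fun x => v x + x * deriv v x) volume 0 1 :=
    hv.continuousOn.intervalIntegrable.add
      (hv.intervalIntegrable_deriv.continuousOn_mul continuousOn_id)
  calc L1d v = ∫ x in (0:ℝ)..1,
        ((1 / 2 * (deriv v x - ψ x) ^ 2 + (2 - deriv ψ x) * v x - 1 / 2 * ψ x ^ 2)
          + ((deriv ψ x * v x + ψ x * deriv v x) - (v x + x * deriv v x))) :=
        integral_congr fun x _ => by ring
    _ = _ := by
      rw [integral_add (intervalIntegrable_calibration hv hv' hψ) (hψvI.sub hidvI),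
        integral_sub hψvI hidvI, hψv, hidv, sub_self, add_zero]

theorem neg_integral_le (hvψ : ∀ x ∈ Icc (0:ℝ) 1, 0 ≤ (2 - deriv ψ x) * v x) :
    -∫ x in (0:ℝ)..1, 1 / 2 * ψ x ^ 2 ≤ L1d v := by
  rw [eq_integral_calibration hv hv' hψ hψ0 hψ1, ← intervalIntegral.integral_neg]
  refine integral_mono_on zero_le_one ?_ (intervalIntegrable_calibration hv hv' hψ)
    fun x hx => ?_
  · exact ((hψ.continuousOn.pow 2).const_smul (1 / 2 : ℝ)).neg.intervalIntegrable
  · nlinarith [sq_nonneg (deriv v x - ψ x), hvψ x hx]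

theorem eq_neg_integral (hderiv : ∀ x ∈ Icc (0:ℝ) 1, deriv v x = ψ x)
    (hvψ : ∀ x ∈ Icc (0:ℝ) 1, (2 - deriv ψ x) * v x = 0) :
    L1d v = -∫ x in (0:ℝ)..1, 1 / 2 * ψ x ^ 2 := by
  rw [eq_integral_calibration hv hv' hψ hψ0 hψ1, ← intervalIntegral.integral_neg]
  refine integral_congr fun x hx => ?_
  rw [uIcc_of_le zero_le_one] at hx
  simp only [hderiv x hx, hvψ x hx]
  ring

end Calibration

def minimizer (x : ℝ) : ℝ := if x ≤ 1 / 2 then 0 else (x - 1 / 2) ^ 2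

def minimizerDeriv (x : ℝ) : ℝ := 2 * max (x - 1 / 2) 0

theorem lipschitzWith_minimizerDeriv : LipschitzWith 2 minimizerDeriv := by
  refine LipschitzWith.of_dist_le_mul fun x y => ?_
  simp only [minimizerDeriv, Real.dist_eq, NNReal.coe_ofNat, ← mul_sub, abs_mul, abs_two]
  exact mul_le_mul_of_nonneg_left
    (by simpa using abs_max_sub_max_le_abs (x - 1 / 2) (y - 1 / 2) 0) zero_le_two

theorem continuous_minimizerDeriv : Continuous minimizerDeriv :=
  lipschitzWith_minimizerDeriv.continuous

theorem continuous_minimizer : Continuous minimizer :=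
  continuous_const.if_le (by fun_prop) continuous_id continuous_const fun x hx => by norm_num [hx]

theorem minimizerDeriv_of_le {x : ℝ} (hx : x ≤ 1 / 2) : minimizerDeriv x = 0 := by
  rw [minimizerDeriv, max_eq_right (by linarith), mul_zero]

theorem minimizerDeriv_of_ge {x : ℝ} (hx : 1 / 2 ≤ x) : minimizerDeriv x = 2 * (x - 1 / 2) := by
  rw [minimizerDeriv, max_eq_left (by linarith)]

theorem hasDerivAt_minimizer (x : ℝ) : HasDerivAt minimizer (minimizerDeriv x) x := by
  refine hasDerivAt_of_hasDerivAt_of_ne' (x := 1 / 2) (fun y hy => ?_)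
    continuous_minimizer.continuousAt continuous_minimizerDeriv.continuousAt x
  rcases hy.lt_or_gt with hy | hy
  · have h : minimizer =ᶠ[nhds y] fun _ => 0 := by
      filter_upwards [Iio_mem_nhds hy] with z hz using if_pos hz.le
    rw [minimizerDeriv_of_le hy.le]
    exact (hasDerivAt_const y 0).congr_of_eventuallyEq h
  · have h : minimizer =ᶠ[nhds y] fun z => (z - 1 / 2) ^ 2 := by
      filter_upwards [Ioi_mem_nhds hy] with z hz using if_neg hz.not_ge
    rw [minimizerDeriv_of_ge hy.le]
    simpa [mul_comm] using (((hasDerivAt_id y).sub_const (1 / 2)).pow 2).congr_of_eventuallyEq h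

theorem deriv_minimizer : deriv minimizer = minimizerDeriv :=
  funext fun x => (hasDerivAt_minimizer x).deriv

theorem absolutelyContinuousOnInterval_minimizer :
    AbsolutelyContinuousOnInterval minimizer 0 1 := by
  have : ContDiff ℝ 1 minimizer := contDiff_one_iff_deriv.2
    ⟨fun x => (hasDerivAt_minimizer x).differentiableAt,
      deriv_minimizer ▸ continuous_minimizerDeriv⟩
  exact this.contDiffOn.absolutelyContinuousOnInterval

theorem two_sub_deriv_minimizerDeriv_nonneg (x : ℝ) : 0 ≤ 2 - deriv minimizerDeriv x := by
  have h := norm_deriv_le_of_lipschitz (x₀ := x) lipschitzWith_minimizerDeriv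
  rw [Real.norm_eq_abs, NNReal.coe_ofNat] at h
  linarith [(abs_le.1 h).2]

theorem two_sub_deriv_minimizerDeriv_mul_minimizer (x : ℝ) :
    (2 - deriv minimizerDeriv x) * minimizer x = 0 := by
  by_cases hx : x ≤ 1 / 2
  · rw [minimizer, if_pos hx, mul_zero]
  · have h : minimizerDeriv =ᶠ[nhds x] fun z => 2 * (z - 1 / 2) := by
      filter_upwards [Ioi_mem_nhds (not_le.1 hx)] with z hz using minimizerDeriv_of_ge hz.le
    have hd := (((hasDerivAt_id x).sub_const (1 / 2)).const_mul 2).congr_of_eventuallyEq h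
    rw [hd.deriv]
    simp

end L1d

open L1d

/-- **Optimality of the explicit example.** The function `u₀(x) = 0` for `x ≤ 1/2`
and `u₀(x) = (x - 1/2)²` for `x ≥ 1/2` minimizes
`L[v] = ∫₀¹ (½ v'² + v − x v')` over all nonnegative convex Lipschitz functions
on `[0,1]`. It is `C^{1,1}` but not `C²`, showing optimality of the regularity. -/
theorem explicit_minimizer_1d (u₀ : ℝ → ℝ)
    (hu₀ : ∀ x, u₀ x = if x ≤ 1 / 2 then 0 else (x - 1 / 2) ^ 2) :
    ∀ v : ℝ → ℝ, (∀ x ∈ Set.Icc (0:ℝ) 1, 0 ≤ v x) →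
      ConvexOn ℝ (Set.Icc (0:ℝ) 1) v →
      (∃ K : NNReal, LipschitzOnWith K v (Set.Icc (0:ℝ) 1)) →
      L1d u₀ ≤ L1d v := by
  rintro v hv0 - ⟨K, hK⟩
  obtain rfl : u₀ = minimizer := funext hu₀
  have hv : AbsolutelyContinuousOnInterval v 0 1 :=
    LipschitzOnWith.absolutelyContinuousOnInterval (K := K) (by rwa [uIcc_of_le zero_le_one])
  have hψ := lipschitzWith_minimizerDeriv.lipschitzOnWith.absolutelyContinuousOnInterval
    (a := 0) (b := 1)
  have hψ0 : minimizerDeriv 0 = 0 := by norm_num [minimizerDeriv]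
  have hψ1 : minimizerDeriv 1 = 1 := by norm_num [minimizerDeriv]
  have hu' : IntervalIntegrable (fun x => deriv minimizer x ^ 2) volume 0 1 := by
    rw [deriv_minimizer]
    exact (continuous_minimizerDeriv.pow 2).intervalIntegrable _ _
  calc L1d minimizer = -∫ x in (0:ℝ)..1, 1 / 2 * minimizerDeriv x ^ 2 :=
        eq_neg_integral absolutelyContinuousOnInterval_minimizer hu' hψ hψ0 hψ1
          (fun x _ => by rw [deriv_minimizer])
          (fun x _ => two_sub_deriv_minimizerDeriv_mul_minimizer x)
    _ ≤ L1d v :=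
        neg_integral_le hv (hK.intervalIntegrable_deriv_sq zero_le_one) hψ hψ0 hψ1
          fun x hx => mul_nonneg (two_sub_deriv_minimizerDeriv_nonneg x) (hv0 x hx)
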